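/- Fix c > 0 and δ > 0 with cδ ≤ 1/e, set a = cδ/2, let y be the solution of the delay initial value problem with initial function φ ∈ Φ, and define b_k = y((k+1)δ) for k ≥ 0. Let n ≥ 1. If b_k > 0 for k = 1,…,n, then y is positive, decreasing and convex on [kδ, (k+1)δ] for each k = 1,…,n, and moreover b_{k+1} ≥ (1−a)·b_k − a·b_{k−1} for k = 1,…,n. -/

import Mathlib

/-!
For `t ≥ δ` we have `y'(t) = -c y(t - δ)`, so what `y` does on one interval of length `δ` controls
the next one: positivity on `[(k-1)δ, kδ]` makes `y` decreasing on `[kδ, (k+1)δ]`, and `y`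
decreasing on `[(k-1)δ, kδ]` makes `y'` increasing, i.e. `y` convex, on `[kδ, (k+1)δ]`. Positivity
propagates because a decreasing function that is positive at the right endpoint is positive.
Finally `b_{k+1} - b_k = -c ∫_{kδ}^{(k+1)δ} y`, and the trapezoid bound for the convex function `y`
gives `∫_{kδ}^{(k+1)δ} y ≤ δ (b_{k-1} + b_k) / 2`.
-/

open MeasureTheory Set

/-- The class `Φ` of initial functions: continuous, strictly decreasing on `[0, δ]`,
with `φ(0) = 1` and `φ(δ) > 0`. -/
def MemPhi (δ : ℝ) (φ : ℝ → ℝ) : Prop :=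
  ContinuousOn φ (Set.Icc 0 δ) ∧ StrictAntiOn φ (Set.Icc 0 δ) ∧ φ 0 = 1 ∧ 0 < φ δ

/-- `y` is a solution on `[0, ∞)` of the delay initial value problem
`y'(t) + c y(t - δ) = 0` for `t ≥ δ`, with `y = φ` on `[0, δ]`. -/
def IsSolDDE (c δ : ℝ) (φ y : ℝ → ℝ) : Prop :=
  ContinuousOn y (Set.Ici 0) ∧ (∀ t ∈ Set.Icc 0 δ, y t = φ t) ∧
  ∀ t ∈ Set.Ici δ, HasDerivWithinAt y (-(c * y (t - δ))) (Set.Ici δ) t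

theorem ConvexOn.intervalIntegral_le_trapezoid {f : ℝ → ℝ} {a b : ℝ} (hab : a ≤ b)
    (hf : ConvexOn ℝ (Icc a b) f) (hfc : ContinuousOn f (Icc a b)) :
    ∫ x in a..b, f x ≤ (b - a) * (f a + f b) / 2 := by
  have hmaps : MapsTo (fun s : ℝ => a + (b - a) * s) (Icc 0 1) (Icc a b) := fun s hs => by
    constructor <;> nlinarith [hs.1, hs.2]
  have hchord : ∀ s ∈ Icc (0 : ℝ) 1, f (a + (b - a) * s) ≤ f a + s * (f b - f a) := by
    intro s hs
    have := hf.2 (left_mem_Icc.2 hab) (right_mem_Icc.2 hab) (sub_nonneg.2 hs.2) hs.1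
      (sub_add_cancel 1 s)
    simp only [smul_eq_mul] at this
    rw [show (1 - s) * a + s * b = a + (b - a) * s by ring] at this
    linarith
  have hint : IntervalIntegrable (fun s => f (a + (b - a) * s)) volume 0 1 :=
    ((hfc.comp (by fun_prop) hmaps).mono (uIcc_of_le zero_le_one).subset).intervalIntegrable
  have hmono := intervalIntegral.integral_mono_on zero_le_one hint
    ((by fun_prop : Continuous fun s : ℝ => f a + s * (f b - f a)).intervalIntegrable _ _) hchord
  have hlin : ∫ s in (0 : ℝ)..1, (f a + s * (f b - f a)) = (f a + f b) / 2 := by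
    simp only [intervalIntegral.integral_add, intervalIntegral.integral_const,
      intervalIntegral.integral_mul_const, integral_id, intervalIntegrable_const,
      intervalIntegral.intervalIntegrable_id, IntervalIntegrable.mul_const, smul_eq_mul]
    ring
  have hsubst := intervalIntegral.smul_integral_comp_add_mul (a := 0) (b := 1) f (b - a) a
  simp only [mul_zero, add_zero, mul_one, add_sub_cancel, smul_eq_mul] at hsubst
  rw [hlin] at hmono
  rw [← hsubst]
  calc (b - a) * ∫ s in (0 : ℝ)..1, f (a + (b - a) * s)
      ≤ (b - a) * ((f a + f b) / 2) := mul_le_mul_of_nonneg_left hmono (sub_nonneg.2 hab)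
    _ = (b - a) * (f a + f b) / 2 := by ring

namespace IsSolDDE

variable {c δ : ℝ} {φ y : ℝ → ℝ}

theorem hasDerivAt (hy : IsSolDDE c δ φ y) {t : ℝ} (ht : δ < t) :
    HasDerivAt y (-(c * y (t - δ))) t :=
  (hy.2.2 t ht.le).hasDerivAt (Ici_mem_nhds ht)

theorem continuousOn_Icc_add (hy : IsSolDDE c δ φ y) {A B : ℝ} (hA : 0 ≤ A) :
    ContinuousOn y (Icc (A + δ) (B + δ)) := by
  have hIci : ContinuousOn y (Ici δ) := fun t ht => (hy.2.2 t ht).continuousWithinAt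
  exact hIci.mono fun t ht => show δ ≤ t by linarith [ht.1]

theorem hasDerivAt_of_mem_Ioo_add (hy : IsSolDDE c δ φ y) {A B : ℝ} (hA : 0 ≤ A) {t : ℝ}
    (ht : t ∈ Ioo (A + δ) (B + δ)) : HasDerivAt y (-(c * y (t - δ))) t :=
  hy.hasDerivAt (by linarith [ht.1])

theorem antitoneOn_Icc_add (hy : IsSolDDE c δ φ y) (hc : 0 ≤ c) {A B : ℝ} (hA : 0 ≤ A)
    (hpos : ∀ t ∈ Icc A B, 0 ≤ y t) : AntitoneOn y (Icc (A + δ) (B + δ)) := by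
  refine antitoneOn_of_hasDerivWithinAt_nonpos (convex_Icc _ _) (hy.continuousOn_Icc_add hA)
    (fun t ht => (hy.hasDerivAt_of_mem_Ioo_add hA (by rwa [interior_Icc] at ht)).hasDerivWithinAt)
    fun t ht => ?_
  rw [interior_Icc] at ht
  exact neg_nonpos.2 (mul_nonneg hc (hpos (t - δ) ⟨by linarith [ht.1], by linarith [ht.2]⟩))

theorem convexOn_Icc_add (hy : IsSolDDE c δ φ y) (hc : 0 ≤ c) {A B : ℝ} (hA : 0 ≤ A)
    (hanti : AntitoneOn y (Icc A B)) : ConvexOn ℝ (Icc (A + δ) (B + δ)) y := by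
  refine MonotoneOn.convexOn_of_deriv (convex_Icc _ _) (hy.continuousOn_Icc_add hA)
    (fun t ht => (hy.hasDerivAt_of_mem_Ioo_add hA (by rwa [interior_Icc] at ht)).differentiableAt
      |>.differentiableWithinAt) fun s hs t ht hst => ?_
  rw [interior_Icc] at hs ht
  rw [(hy.hasDerivAt_of_mem_Ioo_add hA hs).deriv, (hy.hasDerivAt_of_mem_Ioo_add hA ht).deriv]
  have hdelayed : y (t - δ) ≤ y (s - δ) := hanti ⟨by linarith [hs.1], by linarith [hs.2]⟩
    ⟨by linarith [ht.1], by linarith [ht.2]⟩ (by linarith)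
  exact neg_le_neg (mul_le_mul_of_nonneg_left hdelayed hc)

theorem sub_eq_neg_mul_integral (hy : IsSolDDE c δ φ y) {A B : ℝ} (hA : 0 ≤ A) (hAB : A ≤ B) :
    y (B + δ) - y (A + δ) = -(c * ∫ t in A..B, y t) := by
  have hAB' : A + δ ≤ B + δ := by linarith
  have hcont : ContinuousOn (fun t => -(c * y (t - δ))) (uIcc (A + δ) (B + δ)) := by
    rw [uIcc_of_le hAB']
    refine (continuousOn_const.mul (hy.1.comp (continuous_sub_right δ).continuousOn ?_)).neg
    exact fun t ht => show 0 ≤ t - δ by linarith [ht.1]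
  have hFTC := intervalIntegral.integral_eq_sub_of_hasDeriv_right
    (hy.continuousOn_Icc_add (B := B) hA |>.mono (uIcc_of_le hAB').subset)
    (fun t ht => (hy.hasDerivAt_of_mem_Ioo_add hA
      (by rwa [min_eq_left hAB', max_eq_right hAB'] at ht)).hasDerivWithinAt)
    hcont.intervalIntegrable
  rw [← hFTC, intervalIntegral.integral_neg, intervalIntegral.integral_const_mul,
    intervalIntegral.integral_comp_sub_right, add_sub_cancel_right, add_sub_cancel_right]

theorem sub_mul_add_le_of_convexOn (hy : IsSolDDE c δ φ y) (hc : 0 ≤ c) (hδ : 0 ≤ δ) {A : ℝ}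
    (hA : 0 ≤ A) (hconv : ConvexOn ℝ (Icc A (A + δ)) y) :
    y (A + δ) - c * δ / 2 * (y A + y (A + δ)) ≤ y (A + δ + δ) := by
  have htrap := hconv.intervalIntegral_le_trapezoid (by linarith)
    (hy.1.mono fun t ht => show 0 ≤ t by linarith [ht.1])
  have hdiff := hy.sub_eq_neg_mul_integral hA (le_add_of_nonneg_right hδ)
  rw [add_sub_cancel_left] at htrap
  linarith [mul_le_mul_of_nonneg_left htrap hc]

theorem pos_and_antitoneOn_Icc_zero (hy : IsSolDDE c δ φ y) (hφ : MemPhi δ φ) :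
    (∀ t ∈ Icc 0 δ, 0 < y t) ∧ AntitoneOn y (Icc 0 δ) := by
  have hanti : StrictAntiOn y (Icc 0 δ) := hφ.2.1.congr fun t ht => (hy.2.1 t ht).symm
  refine ⟨fun t ht => ?_, hanti.antitoneOn⟩
  have hδ : δ ∈ Icc 0 δ := ⟨ht.1.trans ht.2, le_rfl⟩
  calc 0 < φ δ := hφ.2.2.2
    _ = y δ := (hy.2.1 δ hδ).symm
    _ ≤ y t := hanti.antitoneOn ht hδ ht.2

theorem pos_and_antitoneOn_Icc_mul (hy : IsSolDDE c δ φ y) (hφ : MemPhi δ φ) (hc : 0 ≤ c)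
    (hδ : 0 ≤ δ) {n : ℕ} (hpos : ∀ k : ℕ, 1 ≤ k → k ≤ n → 0 < y ((k + 1) * δ)) :
    ∀ k ≤ n, (∀ t ∈ Icc ((k : ℝ) * δ) ((k + 1) * δ), 0 < y t) ∧
      AntitoneOn y (Icc ((k : ℝ) * δ) ((k + 1) * δ))
  | 0, _ => by simpa using hy.pos_and_antitoneOn_Icc_zero hφ
  | k + 1, hk => by
    have hprev := (pos_and_antitoneOn_Icc_mul hy hφ hc hδ hpos k (by omega)).1
    have hanti := hy.antitoneOn_Icc_add hc (by positivity) fun t ht => (hprev t ht).le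
    rw [show (k : ℝ) * δ + δ = ((k + 1 : ℕ) : ℝ) * δ by push_cast; ring,
      show ((k : ℝ) + 1) * δ + δ = (((k + 1 : ℕ) : ℝ) + 1) * δ by push_cast; ring] at hanti
    refine ⟨fun t ht => ?_, hanti⟩
    calc 0 < y ((((k + 1 : ℕ) : ℝ) + 1) * δ) := hpos (k + 1) (by omega) hk
      _ ≤ y t := hanti ht (right_mem_Icc.2 (ht.1.trans ht.2)) ht.2

end IsSolDDE

theorem stmt11_general (c δ : ℝ) (hc : 0 < c) (hδ : 0 < δ)
    (a : ℝ) (ha : a = c * δ / 2)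
    (φ y : ℝ → ℝ) (hφ : MemPhi δ φ) (hy : IsSolDDE c δ φ y)
    (b : ℕ → ℝ) (hb : ∀ k : ℕ, b k = y ((k + 1) * δ))
    (n : ℕ)
    (hbpos : ∀ k : ℕ, 1 ≤ k → k ≤ n → 0 < b k) :
    (∀ k : ℕ, 1 ≤ k → k ≤ n →
      (∀ t ∈ Set.Icc ((k : ℝ) * δ) ((k + 1) * δ), 0 < y t) ∧
      AntitoneOn y (Set.Icc ((k : ℝ) * δ) ((k + 1) * δ)) ∧
      ConvexOn ℝ (Set.Icc ((k : ℝ) * δ) ((k + 1) * δ)) y) ∧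
    ∀ k : ℕ, 1 ≤ k → k ≤ n → (1 - a) * b k - a * b (k - 1) ≤ b (k + 1) := by
  have hpa := hy.pos_and_antitoneOn_Icc_mul hφ hc.le hδ.le fun k hk hkn => hb k ▸ hbpos k hk hkn
  have hconv : ∀ k, k + 1 ≤ n →
      ConvexOn ℝ (Icc (((k + 1 : ℕ) : ℝ) * δ) ((((k + 1 : ℕ) : ℝ) + 1) * δ)) y := fun k hk => by
    convert hy.convexOn_Icc_add hc.le (by positivity) (hpa k (by omega)).2 using 2 <;>
      push_cast <;> ring
  refine ⟨fun k hk hkn => ⟨(hpa k hkn).1, (hpa k hkn).2, ?_⟩, fun k hk hkn => ?_⟩ <;>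
    obtain ⟨m, rfl⟩ : ∃ m, k = m + 1 := ⟨k - 1, by omega⟩
  · exact hconv m hkn
  · have hrec := hy.sub_mul_add_le_of_convexOn hc.le hδ.le (A := ((m + 1 : ℕ) : ℝ) * δ)
      (by positivity) (by convert hconv m hkn using 2; ring)
    rw [ha, Nat.add_sub_cancel, hb, hb, hb]
    push_cast at hrec ⊢
    ring_nf at hrec ⊢
    linarith

/-- If `b_k = y((k+1)δ) > 0` for `k = 1, …, n`, then `y` is positive, decreasing and convex
on each `[kδ, (k+1)δ]`, `k = 1, …, n`, and `b_{k+1} ≥ (1-a) b_k - a b_{k-1}` for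
`k = 1, …, n`, where `a = cδ/2`. -/
theorem stmt11 (c δ : ℝ) (hc : 0 < c) (hδ : 0 < δ) (hcδ : c * δ ≤ 1 / Real.exp 1)
    (a : ℝ) (ha : a = c * δ / 2)
    (φ y : ℝ → ℝ) (hφ : MemPhi δ φ) (hy : IsSolDDE c δ φ y)
    (b : ℕ → ℝ) (hb : ∀ k : ℕ, b k = y ((k + 1) * δ))
    (n : ℕ) (hn : 1 ≤ n)
    (hbpos : ∀ k : ℕ, 1 ≤ k → k ≤ n → 0 < b k) :
    (∀ k : ℕ, 1 ≤ k → k ≤ n →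
      (∀ t ∈ Set.Icc ((k : ℝ) * δ) ((k + 1) * δ), 0 < y t) ∧
      AntitoneOn y (Set.Icc ((k : ℝ) * δ) ((k + 1) * δ)) ∧
      ConvexOn ℝ (Set.Icc ((k : ℝ) * δ) ((k + 1) * δ)) y) ∧
    ∀ k : ℕ, 1 ≤ k → k ≤ n → (1 - a) * b k - a * b (k - 1) ≤ b (k + 1) :=
  stmt11_general c δ hc hδ a ha φ y hφ hy b hb n hbpos
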